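/- Let ℓ ≥ 3 be an integer and let H_{2,ℓ} be the graph described in the context. Then every total dominating set of H_{2,ℓ} that contains none of the vertices u, v, w has at least 2(ℓ−1) vertices. -/

import Mathlib

/-
Total domination forces every triangle to contain two vertices of `D`: the vertex `t_{i,1}` has a
neighbour `d ∈ D`, which in turn has a neighbour `d' ∈ D`. When `u, v, w ∉ D`, the only neighbours
of a triangle vertex available in `D` lie in its own triangle, so `d ≠ d'` both lie in triangle `i`.
Summing over the `ℓ - 1` disjoint triangles gives `|D| ≥ 2(ℓ - 1)`.
-/

/-- The three special vertices `u`, `v`, `w`. -/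
inductive UVW : Type
  | u | v | w
deriving DecidableEq

/-- Vertices of `H_{2,ℓ}`: triangle vertices `t_{i,j}` as `Sum.inl (i,j)`
(0-indexed), plus `u`, `v`, `w`. -/
abbrev H2lV (l : ℕ) := (Fin (l - 1) × Fin 3) ⊕ UVW

/-- Edge relation of `H_{2,ℓ}`: triangles on each `t_{i,·}`; edges `uv`, `uw`;
`v` adjacent to every `t_{i,j}`; `u` adjacent to `t_{1,1}` (0-indexed `(0,0)`)
and to all `t_{i,j}` with `i ≥ 2` (0-indexed `1 ≤ i.val`); `w` adjacent to
`t_{1,1}` and to `t_{i,1}`, `t_{i,2}` (0-indexed `j ∈ {0,1}`) for `i ≥ 2`;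
`v` and `w` nonadjacent. -/
def H2lRel (l : ℕ) : H2lV l → H2lV l → Prop
  | .inl p, .inl q => p.1 = q.1
  | .inr .u, .inl p => (p.1.val = 0 ∧ p.2.val = 0) ∨ 1 ≤ p.1.val
  | .inr .v, .inl _ => True
  | .inr .w, .inl p =>
      (p.1.val = 0 ∧ p.2.val = 0) ∨ (1 ≤ p.1.val ∧ (p.2.val = 0 ∨ p.2.val = 1))
  | .inr .u, .inr .v => True
  | .inr .u, .inr .w => True
  | _, _ => False

/-- The graph `H_{2,ℓ}`. -/
def H2l (l : ℕ) : SimpleGraph (H2lV l) := SimpleGraph.fromRel (H2lRel l)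

/-- `D` is a total dominating set of `G`. -/
def IsTotalDomSet {V : Type*} (G : SimpleGraph V) (D : Finset V) : Prop :=
  ∀ v : V, ∃ d ∈ D, G.Adj v d


open Finset

lemma IsTotalDomSet.exists_adj_adj {V : Type*} {G : SimpleGraph V} {D : Finset V}
    (hD : IsTotalDomSet G D) (x : V) : ∃ d ∈ D, ∃ d' ∈ D, G.Adj x d ∧ G.Adj d d' := by
  obtain ⟨d, hd, hxd⟩ := hD x
  obtain ⟨d', hd', hdd'⟩ := hD d
  exact ⟨d, hd, d', hd', hxd, hdd'⟩

namespace H2l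

variable {l : ℕ}

lemma adj_inl_inl {p q : Fin (l - 1) × Fin 3} :
    (H2l l).Adj (.inl p) (.inl q) ↔ p ≠ q ∧ p.1 = q.1 := by
  simp only [H2l, SimpleGraph.fromRel_adj, H2lRel, ne_eq, Sum.inl.injEq]
  constructor
  · rintro ⟨hne, h | h⟩
    exacts [⟨hne, h⟩, ⟨hne, h.symm⟩]
  · rintro ⟨hne, h⟩
    exact ⟨hne, .inl h⟩

lemma exists_eq_inl_of_mem {D : Finset (H2lV l)}
    (hu : (Sum.inr UVW.u : H2lV l) ∉ D) (hv : (Sum.inr UVW.v : H2lV l) ∉ D)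
    (hw : (Sum.inr UVW.w : H2lV l) ∉ D) {d : H2lV l} (hd : d ∈ D) :
    ∃ p, d = .inl p := by
  rcases d with p | (_ | _ | _)
  exacts [⟨p, rfl⟩, absurd hd hu, absurd hd hv, absurd hd hw]

lemma one_lt_card_triangle {D : Finset (H2lV l)} (hD : IsTotalDomSet (H2l l) D)
    (hu : (Sum.inr UVW.u : H2lV l) ∉ D) (hv : (Sum.inr UVW.v : H2lV l) ∉ D)
    (hw : (Sum.inr UVW.w : H2lV l) ∉ D) (i : Fin (l - 1)) :
    1 < #{p ∈ D.preimage Sum.inl Sum.inl_injective.injOn | p.1 = i} := by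
  obtain ⟨d, hd, d', hd', hxd, hdd'⟩ := hD.exists_adj_adj (.inl (i, 0))
  obtain ⟨p, rfl⟩ := exists_eq_inl_of_mem hu hv hw hd
  obtain ⟨p', rfl⟩ := exists_eq_inl_of_mem hu hv hw hd'
  obtain ⟨-, hip : i = p.1⟩ := adj_inl_inl.mp hxd
  obtain ⟨hpp', hfst⟩ := adj_inl_inl.mp hdd'
  rw [one_lt_card_iff]
  exact ⟨p, p', by simp [hd, hip], by simp [hd', hip, hfst], hpp'⟩

end H2l

theorem stmt11_general (l : ℕ)
    (D : Finset (H2lV l)) (hD : IsTotalDomSet (H2l l) D)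
    (hu : (Sum.inr UVW.u : H2lV l) ∉ D)
    (hv : (Sum.inr UVW.v : H2lV l) ∉ D)
    (hw : (Sum.inr UVW.w : H2lV l) ∉ D) :
    2 * (l - 1) ≤ D.card := by
  set S := D.preimage Sum.inl Sum.inl_injective.injOn
  calc 2 * (l - 1) = ∑ _i : Fin (l - 1), 2 := by simp [mul_comm]
    _ ≤ ∑ i, #{p ∈ S | p.1 = i} :=
      sum_le_sum fun i _ => H2l.one_lt_card_triangle hD hu hv hw i
    _ = #S := (card_eq_sum_card_fiberwise fun p _ => mem_univ p.1).symm
    _ ≤ #D := card_le_card_of_injOn Sum.inl (fun p hp => mem_preimage.mp hp)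
      Sum.inl_injective.injOn

/-- Every total dominating set of `H_{2,ℓ}` containing none of `u`, `v`, `w`
has at least `2(ℓ-1)` vertices. -/
theorem stmt11 (l : ℕ) (hl : 3 ≤ l)
    (D : Finset (H2lV l)) (hD : IsTotalDomSet (H2l l) D)
    (hu : (Sum.inr UVW.u : H2lV l) ∉ D)
    (hv : (Sum.inr UVW.v : H2lV l) ∉ D)
    (hw : (Sum.inr UVW.w : H2lV l) ∉ D) :
    2 * (l - 1) ≤ D.card :=
  stmt11_general l D hD hu hv hw
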